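/- With the weights of the Match_Π reduction, any two matchings M, M' that each have maximum cardinality on every V_i, contain no edges within a side of the bipartition, and satisfy |M| > |M'| have weight difference at least 1 − 1/|E| − 1/|E|^{n+2} > 0; hence a maximum weight matching among such matchings also has maximum cardinality among them. -/

import Mathlib

/-! The internal edges of `M` and `M'` are equally many and all weigh `|E| + 3`, so the weight
difference is that of the cross edges. `M` has at least one cross edge more than `M'`; each cross
edge weighs in `[1, 1 + δ]` with `δ = 1/|E|² + 1/|E|^(n+3)`, and `M'` has at most `|E|` of them,
so the difference is at least `1 - |E| δ = 1 - 1/|E| - 1/|E|^(n+2)`. -/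

open Finset
open scoped Classical symmDiff

/-- `M` is a matching of the simple graph `G`: a finite set of edges of `G`
that are pairwise vertex-disjoint. -/
def IsMatching {V : Type*} (G : SimpleGraph V) (M : Finset (Sym2 V)) : Prop :=
  ↑M ⊆ G.edgeSet ∧ ∀ v : V, ∀ e ∈ M, ∀ f ∈ M, v ∈ e → v ∈ f → e = f

/-- `v` is covered (matched) by the edge set `M`. -/
def Covers {V : Type*} (M : Finset (Sym2 V)) (v : V) : Prop :=
  ∃ e ∈ M, v ∈ e

/-- Internal edges of `M` w.r.t. the partition given by `part`. -/
noncomputable def internalEdges {V : Type*} {n : ℕ} (part : V → Fin n)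
    (M : Finset (Sym2 V)) : Finset (Sym2 V) :=
  M.filter (fun e => ∀ u ∈ e, ∀ v ∈ e, part u = part v)

section WeightSums

variable {α K : Type*}

theorem sum_sub_sum_eq_sum_filter_not_sub [AddCommGroup K] {s t : Finset α} {P : α → Prop}
    [DecidablePred P] {w : α → K} {c : K}
    (hs : ∀ e ∈ s, P e → w e = c) (ht : ∀ e ∈ t, P e → w e = c)
    (hcard : (s.filter P).card = (t.filter P).card) :
    ∑ e ∈ s, w e - ∑ e ∈ t, w e =
      ∑ e ∈ s.filter (¬ P ·), w e - ∑ e ∈ t.filter (¬ P ·), w e := by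
  have hsP : ∑ e ∈ s.filter P, w e = (s.filter P).card • c :=
    sum_eq_card_nsmul fun e he => hs e (mem_filter.1 he).1 (mem_filter.1 he).2
  have htP : ∑ e ∈ t.filter P, w e = (t.filter P).card • c :=
    sum_eq_card_nsmul fun e he => ht e (mem_filter.1 he).1 (mem_filter.1 he).2
  rw [← sum_filter_add_sum_filter_not s P, ← sum_filter_add_sum_filter_not t P, hsP, htP, hcard]
  abel

theorem card_filter_not_lt_of_card_filter_eq {s t : Finset α} {P : α → Prop} [DecidablePred P]
    (hP : (s.filter P).card = (t.filter P).card) (hcard : t.card < s.card) :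
    (t.filter (¬ P ·)).card < (s.filter (¬ P ·)).card := by
  have hs := card_filter_add_card_filter_not (s := s) P
  have ht := card_filter_add_card_filter_not (s := t) P
  omega

theorem one_sub_mul_le_sum_sub_sum [CommRing K] [LinearOrder K] [IsStrictOrderedRing K]
    {s t : Finset α} {w : α → K} {δ : K} {N : ℕ}
    (hs : ∀ e ∈ s, 1 ≤ w e) (ht : ∀ e ∈ t, w e ≤ 1 + δ) (hδ : 0 ≤ δ)
    (hcard : t.card < s.card) (htN : t.card ≤ N) :
    1 - N * δ ≤ ∑ e ∈ s, w e - ∑ e ∈ t, w e := by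
  have hsum_s : (s.card : K) ≤ ∑ e ∈ s, w e := by
    simpa using card_nsmul_le_sum s w 1 hs
  have hsum_t : ∑ e ∈ t, w e ≤ t.card * (1 + δ) := by
    simpa only [nsmul_eq_mul] using sum_le_card_nsmul t w (1 + δ) ht
  have hst : (t.card : K) + 1 ≤ s.card := by exact_mod_cast hcard
  have htδ : (t.card : K) * δ ≤ N * δ := by gcongr
  nlinarith

end WeightSums

section Arithmetic

variable {K : Type*} [Field K]

theorem mul_one_div_sq_add_one_div_pow {m : K} (hm : m ≠ 0) (k : ℕ) :
    m * (1 / m ^ 2 + 1 / m ^ (k + 3)) = 1 / m + 1 / m ^ (k + 2) := by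
  field_simp
  ring

theorem one_sub_one_div_sub_one_div_pow_pos [LinearOrder K] [IsStrictOrderedRing K] {m : K}
    (hm : 2 ≤ m) (k : ℕ) :
    0 < 1 - 1 / m - 1 / m ^ (k + 2) := by
  have hpow : m ^ 1 < m ^ (k + 2) := pow_lt_pow_right₀ (by linarith) (by omega)
  have hlt : 1 / m ^ (k + 2) < 1 / m :=
    one_div_lt_one_div_of_lt (by positivity) (by simpa using hpow)
  have hle : 1 / m ≤ 1 / 2 := one_div_le_one_div_of_le (by norm_num) hm
  linarith

end Arithmetic

theorem stmt_15_general {V : Type*} {n : ℕ}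
    (part : V → Fin n) (B : Fin n → Bool)
    (E : Finset (Sym2 V)) (hEcard : 1 < E.card)
    (w : Sym2 V → ℚ)
    (hint : ∀ e ∈ E, (∀ u ∈ e, ∀ v ∈ e, part u = part v) → w e = (E.card : ℚ) + 3)
    (hcross : ∀ e ∈ E, ∀ u ∈ e, ∀ v ∈ e, part u ≠ part v → B (part u) ≠ B (part v) →
      1 ≤ w e ∧ w e ≤ 1 + 1 / (E.card : ℚ) ^ 2 + 1 / (E.card : ℚ) ^ (n + 3))
    (M M' : Finset (Sym2 V))
    (hME : M ⊆ E) (hM'E : M' ⊆ E)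
    (hMside : ∀ e ∈ M, ∀ u ∈ e, ∀ v ∈ e, part u ≠ part v → B (part u) ≠ B (part v))
    (hM'side : ∀ e ∈ M', ∀ u ∈ e, ∀ v ∈ e, part u ≠ part v → B (part u) ≠ B (part v))
    (hintcard : (internalEdges part M).card = (internalEdges part M').card)
    (hcard : M'.card < M.card) :
    (∑ e ∈ M, w e) - (∑ e ∈ M', w e) ≥
      1 - 1 / (E.card : ℚ) - 1 / (E.card : ℚ) ^ (n + 2) ∧
    (0 : ℚ) < 1 - 1 / (E.card : ℚ) - 1 / (E.card : ℚ) ^ (n + 2) := by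
  set P : Sym2 V → Prop := fun e => ∀ u ∈ e, ∀ v ∈ e, part u = part v
  have hm : (2 : ℚ) ≤ E.card := by exact_mod_cast hEcard
  set m : ℚ := (E.card : ℚ)
  have cross_bounds : ∀ X ⊆ E,
      (∀ e ∈ X, ∀ u ∈ e, ∀ v ∈ e, part u ≠ part v → B (part u) ≠ B (part v)) →
      ∀ e ∈ X.filter (¬ P ·), 1 ≤ w e ∧ w e ≤ 1 + (1 / m ^ 2 + 1 / m ^ (n + 3)) := by
    intro X hXE hXside e he
    obtain ⟨heX, hnotP⟩ := mem_filter.1 he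
    obtain ⟨u, hu, v, hv, huv⟩ : ∃ u ∈ e, ∃ v ∈ e, part u ≠ part v := by
      simpa [P] using hnotP
    rw [← add_assoc]
    exact hcross e (hXE heX) u hu v hv huv (hXside e heX u hu v hv huv)
  refine ⟨?_, one_sub_one_div_sub_one_div_pow_pos hm n⟩
  rw [ge_iff_le, sum_sub_sum_eq_sum_filter_not_sub (fun e he => hint e (hME he))
    (fun e he => hint e (hM'E he)) hintcard, sub_sub,
    ← mul_one_div_sq_add_one_div_pow (by positivity) n]
  exact one_sub_mul_le_sum_sub_sum (fun e he => (cross_bounds M hME hMside e he).1)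
    (fun e he => (cross_bounds M' hM'E hM'side e he).2) (by positivity)
    (card_filter_not_lt_of_card_filter_eq hintcard hcard)
    (card_le_card ((filter_subset _ _).trans hM'E))

/-- With the Match_Π weights (internal edges weigh `|E| + 3`, cross-bipartition edges
weigh between `1` and `1 + 1/|E|² + 1/|E|^(n+3)`), two matchings `M, M'` with the same
(maximum) number of internal edges, no within-side external edges, and `|M| > |M'|`
have weight difference at least `1 − 1/|E| − 1/|E|^(n+2) > 0`; hence a maximum weight
matching among such matchings also has maximum cardinality among them. -/
theorem stmt_15 {V : Type*} [DecidableEq V] {n : ℕ} (hn : 1 ≤ n) (G : SimpleGraph V)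
    (part : V → Fin n) (B : Fin n → Bool)
    (E : Finset (Sym2 V)) (hE : ↑E = G.edgeSet) (hEcard : 1 < E.card)
    (w : Sym2 V → ℚ)
    (hint : ∀ e ∈ E, (∀ u ∈ e, ∀ v ∈ e, part u = part v) → w e = (E.card : ℚ) + 3)
    (hcross : ∀ e ∈ E, ∀ u ∈ e, ∀ v ∈ e, part u ≠ part v → B (part u) ≠ B (part v) →
      1 ≤ w e ∧ w e ≤ 1 + 1 / (E.card : ℚ) ^ 2 + 1 / (E.card : ℚ) ^ (n + 3))
    (M M' : Finset (Sym2 V)) (hM : IsMatching G M) (hM' : IsMatching G M')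
    (hME : M ⊆ E) (hM'E : M' ⊆ E)
    (hMside : ∀ e ∈ M, ∀ u ∈ e, ∀ v ∈ e, part u ≠ part v → B (part u) ≠ B (part v))
    (hM'side : ∀ e ∈ M', ∀ u ∈ e, ∀ v ∈ e, part u ≠ part v → B (part u) ≠ B (part v))
    (hintcard : (internalEdges part M).card = (internalEdges part M').card)
    (hcard : M'.card < M.card) :
    (∑ e ∈ M, w e) - (∑ e ∈ M', w e) ≥
      1 - 1 / (E.card : ℚ) - 1 / (E.card : ℚ) ^ (n + 2) ∧
    (0 : ℚ) < 1 - 1 / (E.card : ℚ) - 1 / (E.card : ℚ) ^ (n + 2) :=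
  stmt_15_general part B E hEcard w hint hcross M M' hME hM'E hMside hM'side hintcard hcard
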